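/- Let α ∈ (0,1], T > 1, and let u be a C¹ solution of the dust equation on [1,T) × ℝ, 2π-periodic in x. Suppose x : [1,T) → ℝ is differentiable and solves the characteristic ODE ẋ(t) = u(t,x(t)) / √(t^{2α}·u(t,x(t))² + 1) with x(1) = x₀. Then along this characteristic u(t, x(t)) = u(1, x₀)·t^(−2α) for all t ∈ [1,T), and consequently the characteristic satisfies ẋ(t) = u₀·t^(−2α) / √(1 + u₀²·t^(−2α)), where u₀ := u(1, x₀). -/

import Mathlib

/-- The dust equation `∂ₜu + (√(t^{2α}u² + 1))⁻¹·u·∂ₓu = −2α·t⁻¹·u` holding for all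
times `t` in the set `s` (and all `x`). -/
def IsDustSolutionOn (α : ℝ) (s : Set ℝ) (u : ℝ → ℝ → ℝ) : Prop :=
  ∀ t ∈ s, ∀ x : ℝ,
    deriv (fun s' => u s' x) t
      + (Real.sqrt (t ^ (2 * α) * (u t x) ^ 2 + 1))⁻¹ * u t x * deriv (u t) x
      = -(2 * α) * t⁻¹ * u t x

/-- Along a characteristic of the dust equation, the fluid velocity satisfies
`u(t, x(t)) = u(1, x₀)·t^(−2α)`, and consequently the characteristic ODE reduces to
`ẋ(t) = u₀·t^(−2α)/√(1 + u₀²·t^(−2α))` with `u₀ = u(1, x₀)`. -/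
theorem dust_characteristic_velocity (α : ℝ) (hα0 : 0 < α) (hα1 : α ≤ 1)
    (T : ℝ) (hT : 1 < T) (u : ℝ → ℝ → ℝ)
    (hu : ContDiffOn ℝ 1 (fun p : ℝ × ℝ => u p.1 p.2) (Set.Ico 1 T ×ˢ Set.univ))
    (huper : ∀ t x, u t (x + 2 * Real.pi) = u t x)
    (hsol : IsDustSolutionOn α (Set.Ico 1 T) u)
    (x₀ : ℝ) (γ : ℝ → ℝ) (hγ1 : γ 1 = x₀)
    (hγ : ∀ t ∈ Set.Ico (1:ℝ) T,
      HasDerivAt γ (u t (γ t) / Real.sqrt (t ^ (2 * α) * (u t (γ t)) ^ 2 + 1)) t) :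
    ∀ t ∈ Set.Ico (1:ℝ) T,
      u t (γ t) = u 1 x₀ * t ^ (-(2 * α))
      ∧ HasDerivAt γ
          (u 1 x₀ * t ^ (-(2 * α)) / Real.sqrt (1 + (u 1 x₀) ^ 2 * t ^ (-(2 * α)))) t := by
  set U : ℝ × ℝ → ℝ := fun p => u p.1 p.2 with hU
  set v : ℝ → ℝ := fun t => u t (γ t) with hv
  set c : ℝ := u 1 x₀ with hc
  -- continuity of γ on Ico 1 T
  have hγc : ContinuousOn γ (Set.Ico 1 T) := fun t ht =>
    (hγ t ht).continuousAt.continuousWithinAt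
  -- continuity of v on Ico 1 T
  have hvc : ContinuousOn v (Set.Ico 1 T) := by
    have hUc : ContinuousOn U (Set.Ico 1 T ×ˢ Set.univ) := hu.continuousOn
    exact hUc.comp (continuousOn_id.prodMk hγc)
      (fun t ht => ⟨ht, Set.mem_univ _⟩)
  -- derivative of v on Ioo 1 T
  have hvd : ∀ t ∈ Set.Ioo (1:ℝ) T, HasDerivAt v (-(2 * α) * t⁻¹ * v t) t := by
    intro t ht
    have htIco : t ∈ Set.Ico (1:ℝ) T := ⟨le_of_lt ht.1, ht.2⟩
    have hmem : Set.Ico 1 T ×ˢ (Set.univ : Set ℝ) ∈ nhds ((t, γ t) : ℝ × ℝ) := by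
      have h1 : Set.Ioo 1 T ×ˢ (Set.univ : Set ℝ) ∈ nhds ((t, γ t) : ℝ × ℝ) :=
        (isOpen_Ioo.prod isOpen_univ).mem_nhds ⟨ht, Set.mem_univ _⟩
      exact Filter.mem_of_superset h1
        (Set.prod_mono Set.Ioo_subset_Ico_self subset_rfl)
    have hd : DifferentiableAt ℝ U (t, γ t) :=
      (hu.contDiffAt hmem).differentiableAt one_ne_zero
    have hF : HasFDerivAt U (fderiv ℝ U (t, γ t)) (t, γ t) := hd.hasFDerivAt
    set F := fderiv ℝ U (t, γ t) with hFdef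
    have hpt : HasDerivAt (fun s => u s (γ t)) (F (1, 0)) t := by
      have hg : HasDerivAt (fun s : ℝ => ((s, γ t) : ℝ × ℝ)) ((1 : ℝ), (0 : ℝ)) t :=
        (hasDerivAt_id t).prodMk (hasDerivAt_const t (γ t))
      exact hF.comp_hasDerivAt t hg
    have hpx : HasDerivAt (u t) (F (0, 1)) (γ t) := by
      have hg : HasDerivAt (fun s : ℝ => ((t, s) : ℝ × ℝ)) ((0 : ℝ), (1 : ℝ)) (γ t) :=
        (hasDerivAt_const (γ t) t).prodMk (hasDerivAt_id (γ t))
      exact hF.comp_hasDerivAt (γ t) hg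
    have hgd := hγ t htIco
    have hvder : HasDerivAt v
        (F (1, u t (γ t) / Real.sqrt (t ^ (2 * α) * (u t (γ t)) ^ 2 + 1))) t :=
      by have := hF.comp_hasDerivAt t ((hasDerivAt_id t).prodMk hgd); exact this
    have hlin : ∀ y : ℝ, F (1, y) = F (1, 0) + y * F (0, 1) := by
      intro y
      have h1 : ((1, y) : ℝ × ℝ) = (1, 0) + y • ((0, 1) : ℝ × ℝ) := by
        simp [Prod.ext_iff]
      rw [h1, map_add, map_smul, smul_eq_mul]
    have heq : F (1, u t (γ t) / Real.sqrt (t ^ (2 * α) * (u t (γ t)) ^ 2 + 1))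
        = -(2 * α) * t⁻¹ * v t := by
      have h := hsol t htIco (γ t)
      rw [hpt.deriv, hpx.deriv] at h
      rw [hlin]
      have hs : Real.sqrt (t ^ (2 * α) * (u t (γ t)) ^ 2 + 1) ≠ 0 := by
        have htpos : (0:ℝ) < t := lt_trans one_pos ht.1
        have : (0:ℝ) < t ^ (2 * α) * (u t (γ t)) ^ 2 + 1 := by positivity
        exact ne_of_gt (Real.sqrt_pos.mpr this)
      field_simp at h ⊢
      rw [show v t = u t (γ t) from rfl, h]
      ring
    rw [heq] at hvder
    exact hvder
  have ht0 : ∀ t : ℝ, t ∈ Set.Ico (1:ℝ) T → (0:ℝ) < t := fun t ht =>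
    lt_of_lt_of_le one_pos ht.1
  -- the key velocity formula
  have key : ∀ t ∈ Set.Ico (1:ℝ) T, v t = c * t ^ (-(2 * α)) := by
    set w : ℝ → ℝ := fun t => v t * t ^ (2 * α) with hw
    have hwc : ContinuousOn w (Set.Ico 1 T) := by
      apply hvc.mul
      exact continuousOn_id.rpow_const (fun x hx => Or.inr (by linarith))
    have hwd : ∀ t ∈ Set.Ioo (1:ℝ) T, HasDerivAt w 0 t := by
      intro t ht
      have htpos : (0:ℝ) < t := lt_trans one_pos ht.1
      have hr : HasDerivAt (fun s : ℝ => s ^ (2 * α)) (2 * α * t ^ (2 * α - 1)) t :=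
        Real.hasDerivAt_rpow_const (Or.inl (ne_of_gt htpos))
      have := (hvd t ht).mul hr
      refine this.congr_deriv ?_
      have h1 : t ^ (2 * α - 1) = t ^ (2 * α) * t⁻¹ := by
        rw [Real.rpow_sub htpos, Real.rpow_one, div_eq_mul_inv]
      rw [h1]; ring
    have hw1 : w 1 = c := by
      simp [hw, hv, hγ1, Real.one_rpow, hc]
    have hwconst : ∀ t ∈ Set.Ico (1:ℝ) T, w t = c := by
      intro t ht
      rcases eq_or_lt_of_le ht.1 with h1 | h1
      · rw [← h1]; exact hw1
      · -- t > 1 : constancy on [a, t] for each a ∈ (1, t), then a → 1⁺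
        have hstep : ∀ a ∈ Set.Ioo (1:ℝ) t, w t = w a := by
          intro a ha
          have hab : Set.Icc a t ⊆ Set.Ico 1 T := fun y hy =>
            ⟨le_trans (le_of_lt ha.1) hy.1, lt_of_le_of_lt hy.2 ht.2⟩
          have := constant_of_has_deriv_right_zero (f := w) (a := a) (b := t)
            (hwc.mono hab)
            (fun y hy => (hwd y ⟨lt_of_lt_of_le ha.1 hy.1,
              lt_trans hy.2 ht.2⟩).hasDerivWithinAt)
          exact this t ⟨le_of_lt ha.2, le_refl t⟩
        have hIoomem : Set.Ioo (1:ℝ) t ∈ nhdsWithin (1:ℝ) (Set.Ioi 1) :=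
          Ioo_mem_nhdsGT_of_mem ⟨le_refl 1, h1⟩
        have hle : nhdsWithin (1:ℝ) (Set.Ioi 1) ≤ nhdsWithin (1:ℝ) (Set.Ico 1 T) := by
          apply nhdsWithin_le_of_mem
          exact Filter.mem_of_superset hIoomem
            (fun y hy => ⟨le_of_lt hy.1, lt_trans hy.2 ht.2⟩)
        have h1mem : (1:ℝ) ∈ Set.Ico (1:ℝ) T := ⟨le_refl 1, hT⟩
        have htend : Filter.Tendsto w (nhdsWithin (1:ℝ) (Set.Ioi 1)) (nhds (w 1)) :=
          ((hwc 1 h1mem).tendsto).mono_left hle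
        have htend2 : Filter.Tendsto w (nhdsWithin (1:ℝ) (Set.Ioi 1)) (nhds (w t)) := by
          apply Filter.Tendsto.congr' _ (tendsto_const_nhds (x := w t))
          filter_upwards [hIoomem] with a ha
          exact hstep a ha
        have := tendsto_nhds_unique htend2 htend
        rw [this, hw1]
    intro t ht
    have hAB : t ^ (2 * α) * t ^ (-(2 * α)) = 1 := by
      rw [← Real.rpow_add (ht0 t ht)]; simp
    have hwt := hwconst t ht
    simp only [hw] at hwt
    linear_combination t ^ (-(2 * α)) * hwt - v t * hAB
  intro t ht
  have hval : u t (γ t) = c * t ^ (-(2 * α)) := key t ht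
  refine ⟨hval, ?_⟩
  have hgd := hγ t ht
  rw [hval] at hgd
  have harg : t ^ (2 * α) * (c * t ^ (-(2 * α))) ^ 2 + 1
      = 1 + c ^ 2 * t ^ (-(2 * α)) := by
    have hAB : t ^ (2 * α) * t ^ (-(2 * α)) = 1 := by
      rw [← Real.rpow_add (ht0 t ht)]; simp
    linear_combination (c ^ 2 * t ^ (-(2 * α))) * hAB
  rw [harg] at hgd
  exact hgd
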